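/- arXiv:2003.13132 — 4 statements merged into one kernel-verified Lean document; each statement's English description precedes it below -/
import Mathlib

section
/- Let m = m(n) be a sequence of positive integers with (ln n)/m(n) → 0 as n → ∞ (i.e. m ≫ ln n). Then for every fixed real z > 0, the quantity z·n^z·∫_0^∞ [1 − (1 − S_m(τ)e^{−τ})^n]·τ^{z−1} dτ is asymptotically equivalent to n^z·m^z as n → ∞; equivalently, z·∫_0^∞ [1 − (1 − S_{m}(mξ)e^{−mξ})^n]·ξ^{z−1} dξ → 1 as n → ∞. (This quantity equals the z-th moment E[Δ_{m,n}^z] of the maximum Δ_{m,n} of n independent Erlang(m, 1/n) random variables.) -/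
/-!
Let `p_m(ξ) = S_m(mξ) e^{-mξ}`, the probability that an Erlang(m, 1) variable exceeds `mξ`, and
`I(ξ) = ξ - 1 - log ξ`. Comparing the exponential series of `mξ` and of `m` term by term gives the
Chernoff bounds `p_m(ξ) ≤ e^{-m I(ξ)}` for `ξ ≥ 1` and `1 - p_m(ξ) ≤ e^{-m I(ξ)}` for `ξ ≤ 1`.
Hence `1 - (1 - p_m(ξ))^n ≥ p_m(ξ)` tends to `1` on `(0, 1)` because `m → ∞`, while
`1 - (1 - p_m(ξ))^n ≤ n p_m(ξ) ≤ n e^{-m I(ξ)}` tends to `0` on `(1, ∞)` because `m ≫ log n`.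
The same bound, with the convexity of `I`, dominates the integrand by `e^{2-ξ} ξ^{z-1}`, so by
dominated convergence the integral tends to `∫_0^1 ξ^{z-1} dξ = 1/z`.
-/

open MeasureTheory Filter Real

/-- `S m y = ∑_{l=0}^{m-1} y^l / l!`, the `m`-th partial sum of the Taylor series of `e^y`. -/
noncomputable def S (m : ℕ) (y : ℝ) : ℝ := ∑ l ∈ Finset.range m, y ^ l / (Nat.factorial l)

open Set Topology

lemma S_nonneg (m : ℕ) {x : ℝ} (hx : 0 ≤ x) : 0 ≤ S m x :=
  Finset.sum_nonneg fun _ _ => by positivity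

lemma continuous_S (m : ℕ) : Continuous (S m) :=
  continuous_finsetSum _ fun _ _ => by fun_prop

lemma S_mul_exp_neg_le_one (m : ℕ) {x : ℝ} (hx : 0 ≤ x) : S m x * exp (-x) ≤ 1 := by
  calc S m x * exp (-x) ≤ exp x * exp (-x) := by
        gcongr; exact Real.sum_le_exp_of_nonneg hx m
    _ = 1 := by rw [← exp_add, add_neg_cancel, exp_zero]

lemma hasSum_exp_sub_S (m : ℕ) (x : ℝ) :
    HasSum (fun l => x ^ (l + m) / (l + m).factorial) (exp x - S m x) := by
  refine (hasSum_nat_add_iff' m).mpr ?_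
  rw [Real.exp_eq_exp_ℝ]
  exact NormedSpace.expSeries_div_hasSum_exp x

lemma S_mul_le_pow_mul (m : ℕ) {ξ y : ℝ} (hξ : 1 ≤ ξ) (hy : 0 ≤ y) :
    S m (ξ * y) ≤ ξ ^ m * S m y := by
  rw [S, S, Finset.mul_sum]
  refine Finset.sum_le_sum fun l hl => ?_
  rw [mul_pow, mul_div_assoc]
  gcongr
  exact (Finset.mem_range.mp hl).le

lemma exp_sub_S_mul_le (m : ℕ) {ξ y : ℝ} (hξ0 : 0 ≤ ξ) (hξ1 : ξ ≤ 1) (hy : 0 ≤ y) :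
    exp (ξ * y) - S m (ξ * y) ≤ ξ ^ m * (exp y - S m y) := by
  refine hasSum_le (fun l => ?_) (hasSum_exp_sub_S m (ξ * y)) ((hasSum_exp_sub_S m y).mul_left _)
  rw [mul_pow, mul_div_assoc]
  exact mul_le_mul_of_nonneg_right (pow_le_pow_of_le_one hξ0 hξ1 (Nat.le_add_left m l))
    (by positivity)

/-- The Cramér rate function of the exponential law. -/
noncomputable def erlangRate (ξ : ℝ) : ℝ := ξ - 1 - log ξ

lemma erlangRate_pos {ξ : ℝ} (h0 : 0 < ξ) (h1 : ξ ≠ 1) : 0 < erlangRate ξ := by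
  have := log_lt_sub_one_of_pos h0 h1
  unfold erlangRate; linarith

lemma erlangRate_two_add_le {ξ : ℝ} (hξ : 2 ≤ ξ) : erlangRate 2 + (ξ - 2) / 2 ≤ erlangRate ξ := by
  have h := log_le_sub_one_of_pos (by positivity : 0 < ξ / 2)
  rw [log_div (by positivity) two_ne_zero] at h
  unfold erlangRate; linarith

lemma pow_mul_exp_mul_exp_neg (m : ℕ) {ξ : ℝ} (hξ : 0 < ξ) :
    ξ ^ m * exp m * exp (-(m * ξ)) = exp (-(m * erlangRate ξ)) := by
  rw [← exp_log (pow_pos hξ m), log_pow, ← exp_add, ← exp_add, erlangRate]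
  ring_nf

lemma S_mul_exp_neg_le_exp_erlangRate (m : ℕ) {ξ : ℝ} (hξ : 1 ≤ ξ) :
    S m (m * ξ) * exp (-(m * ξ)) ≤ exp (-(m * erlangRate ξ)) := by
  rw [← pow_mul_exp_mul_exp_neg m (by linarith), mul_comm (m : ℝ) ξ]
  gcongr
  exact (S_mul_le_pow_mul m hξ m.cast_nonneg).trans
    (by gcongr; exact Real.sum_le_exp_of_nonneg m.cast_nonneg m)

lemma one_sub_S_mul_exp_neg_le_exp_erlangRate (m : ℕ) {ξ : ℝ} (hξ0 : 0 < ξ) (hξ1 : ξ ≤ 1) :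
    1 - S m (m * ξ) * exp (-(m * ξ)) ≤ exp (-(m * erlangRate ξ)) := by
  rw [← pow_mul_exp_mul_exp_neg m hξ0, mul_comm (m : ℝ) ξ]
  have h := exp_sub_S_mul_le m hξ0.le hξ1 m.cast_nonneg
  have hS := S_nonneg m m.cast_nonneg
  have hexp : exp (ξ * m) * exp (-(ξ * m)) = 1 := by rw [← exp_add, add_neg_cancel, exp_zero]
  calc 1 - S m (ξ * m) * exp (-(ξ * m)) = (exp (ξ * m) - S m (ξ * m)) * exp (-(ξ * m)) := by
        rw [sub_mul, hexp]
    _ ≤ ξ ^ m * exp m * exp (-(ξ * m)) := by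
        gcongr
        exact h.trans (by gcongr; linarith)

lemma one_sub_one_sub_pow_le_mul {p : ℝ} (hp : p ≤ 2) (n : ℕ) : 1 - (1 - p) ^ n ≤ n * p := by
  have := one_add_mul_le_pow (by linarith : (-2 : ℝ) ≤ -p) n
  rw [← sub_eq_add_neg] at this
  linarith

lemma le_one_sub_one_sub_pow {p : ℝ} (hp0 : 0 ≤ p) (hp1 : p ≤ 1) {n : ℕ} (hn : n ≠ 0) :
    p ≤ 1 - (1 - p) ^ n := by
  have := pow_le_of_le_one (by linarith : 0 ≤ 1 - p) (by linarith) hn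
  linarith

lemma tendsto_atTop_of_tendsto_log_div {m : ℕ → ℕ} (hm : ∀ n, 0 < m n)
    (hgrow : Tendsto (fun n : ℕ => log n / (m n : ℝ)) atTop (𝓝 0)) :
    Tendsto (fun n => (m n : ℝ)) atTop atTop := by
  refine tendsto_atTop_mono' _ ?_ (tendsto_log_atTop.comp tendsto_natCast_atTop_atTop)
  filter_upwards [hgrow.eventually_lt_const one_pos] with n hn
  exact ((div_lt_one (by exact_mod_cast hm n)).mp hn).le

lemma tendsto_mul_exp_neg_mul_of_tendsto_log_div {m : ℕ → ℕ} (hm : ∀ n, 0 < m n)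
    (hgrow : Tendsto (fun n : ℕ => log n / (m n : ℝ)) atTop (𝓝 0)) {c : ℝ} (hc : 0 < c) :
    Tendsto (fun n : ℕ => n * exp (-(m n * c))) atTop (𝓝 0) := by
  have hlin : Tendsto (fun n : ℕ => log n - m n * c) atTop atBot := by
    refine ((tendsto_atTop_of_tendsto_log_div hm hgrow).atTop_mul_neg (neg_neg_of_pos hc)
      (by simpa using hgrow.sub_const c)).congr fun n => ?_
    field_simp [(hm n).ne']
  refine (tendsto_exp_atBot.comp hlin).congr' ?_
  filter_upwards [eventually_ge_atTop 1] with n hn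
  rw [Function.comp_apply, sub_eq_add_neg, exp_add, exp_log (by exact_mod_cast hn)]

/-- `P(max of n i.i.d. Erlang(m, 1) variables > m ξ)`. -/
noncomputable def erlangMaxTail (m n : ℕ) (ξ : ℝ) : ℝ :=
  1 - (1 - S m (m * ξ) * exp (-(m * ξ))) ^ n

section erlangMaxTail

variable (m n : ℕ) {ξ : ℝ}

lemma continuous_erlangMaxTail : Continuous (erlangMaxTail m n) := by
  unfold erlangMaxTail
  have := continuous_S m
  fun_prop

lemma S_mul_exp_neg_mem_Icc (hξ : 0 ≤ ξ) : S m (m * ξ) * exp (-(m * ξ)) ∈ Icc 0 1 :=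
  ⟨by have := S_nonneg m (by positivity : (0 : ℝ) ≤ m * ξ); positivity,
    S_mul_exp_neg_le_one m (by positivity)⟩

lemma erlangMaxTail_nonneg (hξ : 0 ≤ ξ) : 0 ≤ erlangMaxTail m n ξ := by
  obtain ⟨h0, h1⟩ := S_mul_exp_neg_mem_Icc m hξ
  have := pow_le_one₀ (n := n) (by linarith : 0 ≤ 1 - S m (m * ξ) * exp (-(m * ξ))) (by linarith)
  unfold erlangMaxTail; linarith

lemma erlangMaxTail_le_one (hξ : 0 ≤ ξ) : erlangMaxTail m n ξ ≤ 1 := by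
  obtain ⟨h0, h1⟩ := S_mul_exp_neg_mem_Icc m hξ
  have := pow_nonneg (by linarith : 0 ≤ 1 - S m (m * ξ) * exp (-(m * ξ))) n
  unfold erlangMaxTail; linarith

lemma erlangMaxTail_le_mul_exp (hξ : 1 ≤ ξ) :
    erlangMaxTail m n ξ ≤ n * exp (-(m * erlangRate ξ)) :=
  (one_sub_one_sub_pow_le_mul (by linarith [(S_mul_exp_neg_mem_Icc m (by linarith : 0 ≤ ξ)).2])
    n).trans (by gcongr; exact S_mul_exp_neg_le_exp_erlangRate m hξ)

lemma one_sub_exp_le_erlangMaxTail (hn : n ≠ 0) (hξ0 : 0 < ξ) (hξ1 : ξ ≤ 1) :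
    1 - exp (-(m * erlangRate ξ)) ≤ erlangMaxTail m n ξ := by
  obtain ⟨h0, h1⟩ := S_mul_exp_neg_mem_Icc m hξ0.le
  have := one_sub_S_mul_exp_neg_le_exp_erlangRate m hξ0 hξ1
  exact (by linarith : 1 - exp (-(m * erlangRate ξ)) ≤ S m (m * ξ) * exp (-(m * ξ))).trans
    (le_one_sub_one_sub_pow h0 h1 hn)

lemma erlangMaxTail_le_exp_two_sub (hm : 2 ≤ m) (hn : n * exp (-(m * erlangRate 2)) ≤ 1)
    (hξ : 0 ≤ ξ) : erlangMaxTail m n ξ ≤ exp (2 - ξ) := by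
  rcases le_or_gt ξ 2 with hξ2 | hξ2
  · exact (erlangMaxTail_le_one m n hξ).trans (one_le_exp (by linarith))
  have hrate : -(m * erlangRate ξ) ≤ -(m * erlangRate 2) + (2 - ξ) := by
    have := erlangRate_two_add_le hξ2.le
    have hm' : (2 : ℝ) ≤ m := by exact_mod_cast hm
    nlinarith
  calc erlangMaxTail m n ξ ≤ n * exp (-(m * erlangRate ξ)) :=
        erlangMaxTail_le_mul_exp m n (by linarith)
    _ ≤ n * exp (-(m * erlangRate 2)) * exp (2 - ξ) := by
        rw [mul_assoc, ← exp_add]; gcongr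
    _ ≤ exp (2 - ξ) := mul_le_of_le_one_left (exp_pos _).le hn

end erlangMaxTail

section Limits

variable {m : ℕ → ℕ} {ξ : ℝ}

lemma tendsto_erlangMaxTail_of_lt_one (hmtop : Tendsto (fun n => (m n : ℝ)) atTop atTop)
    (hξ0 : 0 < ξ) (hξ1 : ξ < 1) :
    Tendsto (fun n => erlangMaxTail (m n) n ξ) atTop (𝓝 1) := by
  have hexp : Tendsto (fun n => exp (-(m n * erlangRate ξ))) atTop (𝓝 0) :=
    tendsto_exp_atBot.comp <| tendsto_neg_atTop_atBot.comp <|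
      hmtop.atTop_mul_const (erlangRate_pos hξ0 hξ1.ne)
  refine tendsto_of_tendsto_of_tendsto_of_le_of_le' (by simpa using hexp.const_sub 1)
    tendsto_const_nhds ?_ (Eventually.of_forall fun n => erlangMaxTail_le_one _ n hξ0.le)
  filter_upwards [eventually_ne_atTop 0] with n hn
  exact one_sub_exp_le_erlangMaxTail _ n hn hξ0 hξ1.le

lemma tendsto_erlangMaxTail_of_one_lt (hm : ∀ n, 0 < m n)
    (hgrow : Tendsto (fun n : ℕ => log n / (m n : ℝ)) atTop (𝓝 0)) (hξ : 1 < ξ) :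
    Tendsto (fun n => erlangMaxTail (m n) n ξ) atTop (𝓝 0) :=
  tendsto_of_tendsto_of_tendsto_of_le_of_le tendsto_const_nhds
    (tendsto_mul_exp_neg_mul_of_tendsto_log_div hm hgrow (erlangRate_pos (by linarith) hξ.ne'))
    (fun n => erlangMaxTail_nonneg _ n (by linarith))
    (fun n => erlangMaxTail_le_mul_exp _ n hξ.le)

end Limits

lemma integral_indicator_Iio_one_rpow {z : ℝ} (hz : 0 < z) :
    ∫ ξ in Ioi (0 : ℝ), (Iio 1).indicator (fun ξ => ξ ^ (z - 1)) ξ = z⁻¹ := by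
  rw [setIntegral_indicator measurableSet_Iio, Ioi_inter_Iio, ← integral_Ioc_eq_integral_Ioo,
    ← intervalIntegral.integral_of_le zero_le_one, integral_rpow (Or.inl (by linarith))]
  simp [zero_rpow hz.ne']

theorem tendsto_integral_erlangMaxTail_mul_rpow {m : ℕ → ℕ} (hm : ∀ n, 0 < m n)
    (hgrow : Tendsto (fun n : ℕ => log n / (m n : ℝ)) atTop (𝓝 0)) {z : ℝ} (hz : 0 < z) :
    Tendsto (fun n => ∫ ξ in Ioi (0 : ℝ), erlangMaxTail (m n) n ξ * ξ ^ (z - 1)) atTop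
      (𝓝 z⁻¹) := by
  have hmtop := tendsto_atTop_of_tendsto_log_div hm hgrow
  rw [← integral_indicator_Iio_one_rpow hz]
  refine tendsto_integral_filter_of_dominated_convergence
    (fun ξ => exp 2 * (exp (-ξ) * ξ ^ (z - 1)))
    (Eventually.of_forall fun n => ?_) ?_ ((GammaIntegral_convergent hz).const_mul _) ?_
  · exact ((continuous_erlangMaxTail _ n).continuousOn.mul
      (continuousOn_id.rpow_const fun ξ hξ => Or.inl (ne_of_gt hξ))).aestronglyMeasurable
      measurableSet_Ioi
  · filter_upwards [hmtop.eventually_ge_atTop 2, (tendsto_mul_exp_neg_mul_of_tendsto_log_div hm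
      hgrow (erlangRate_pos two_pos (by norm_num))).eventually_le_const one_pos] with n hm2 hn
    filter_upwards [ae_restrict_mem measurableSet_Ioi] with ξ (hξ : 0 < ξ)
    rw [norm_of_nonneg (mul_nonneg (erlangMaxTail_nonneg _ n hξ.le) (by positivity)),
      ← mul_assoc, ← exp_add, ← sub_eq_add_neg]
    gcongr
    exact erlangMaxTail_le_exp_two_sub _ n (by exact_mod_cast hm2) hn hξ.le
  · filter_upwards [ae_restrict_mem measurableSet_Ioi, ae_restrict_of_ae (Measure.ae_ne volume 1)]
      with ξ (hξ : 0 < ξ) hξ1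
    rcases hξ1.lt_or_gt with hlt | hgt
    · simpa [indicator_of_mem (show ξ ∈ Iio 1 from hlt)] using
        (tendsto_erlangMaxTail_of_lt_one hmtop hξ hlt).mul_const (ξ ^ (z - 1))
    · simpa [indicator_of_notMem (show ξ ∉ Iio 1 from not_lt.mpr hgt.le)] using
        (tendsto_erlangMaxTail_of_one_lt hm hgrow hgt).mul_const (ξ ^ (z - 1))

/-- Supercritical case `m ≫ ln n`: for every fixed `z > 0`,
`z ∫_0^∞ [1 − (1 − S_m(mξ)e^{−mξ})^n] ξ^{z−1} dξ → 1`, i.e. the `z`-th moment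
`z n^z ∫_0^∞ [1 − (1 − S_m(τ)e^{−τ})^n] τ^{z−1} dτ` of the maximum of `n` independent
Erlang(m, 1/n) random variables is asymptotically `n^z m^z`. -/
theorem stmt0 (m : ℕ → ℕ) (hm : ∀ n, 0 < m n)
    (hgrow : Tendsto (fun n : ℕ => Real.log n / (m n : ℝ)) atTop (nhds 0))
    (z : ℝ) (hz : 0 < z) :
    Tendsto (fun n : ℕ =>
        z * ∫ ξ in Set.Ioi (0 : ℝ),
          (1 - (1 - S (m n) ((m n : ℝ) * ξ) * Real.exp (-((m n : ℝ) * ξ))) ^ n)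
            * ξ ^ (z - 1))
      atTop (nhds 1) := by
  have h := (tendsto_integral_erlangMaxTail_mul_rpow hm hgrow hz).const_mul z
  rw [mul_inv_cancel₀ hz.ne'] at h
  exact h
end

section
/- Let m = m(n) be a sequence of positive integers with (ln n)³/m(n) → 0 as n → ∞, let y be a fixed real number, and set λ(n) := m + √m·√(2 ln n − ln ln n) + (√m/√(2 ln n))·y. Then n·S_m(λ(n))·e^{−λ(n)} → e^{−y}/(2√π) as n → ∞, i.e. S_m(λ)e^{−λ} ∼ (1/n)·e^{−y}/(2√π). -/
/-!
Read backwards from the first omitted term `λ^M/M!`, the terms of `S_M(λ)` decrease by ratios at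
most `M/λ`, and at least `(M - K)/λ` over the first `K` steps; so `S_M(λ)` is squeezed between two
geometric series and `S_M(λ) ~ (λ^M/M!) · M/(λ - M)` as soon as `λ - M ≫ √M`. For `λ = M + √M x` with `x → ∞` and
`x³ = o(√M)`, Stirling's formula and `log(1 + u) = u - u²/2 + O(u³)` turn this into the Gaussian
Mills-ratio asymptotics `S_M(λ) e^{-λ} ~ e^{-x²/2} / (x √(2π))`. The hypothesis `(ln n)³ = o(m)` is
exactly `x³ = o(√m)` for `x = √(2 ln n - ln ln n) + y/√(2 ln n)`, and for this `x` a direct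
computation gives `n e^{-x²/2} / (x √(2π)) → e^{-y} / (2√π)`.
-/

open MeasureTheory Filter Real

open Finset Topology
open scoped Nat

/-- The first omitted term `λ^M/M!` times the sum `M/(λ - M)` of the geometric series with ratio
`M/λ`. -/
noncomputable def partialSumApprox (M : ℕ) (lam : ℝ) : ℝ := lam ^ M / M ! * (M / (lam - M))

lemma S_eq_mul_sum_descFactorial (M : ℕ) {lam : ℝ} (hlam : lam ≠ 0) :
    S M lam = lam ^ M / M ! * ∑ k ∈ range M, (M.descFactorial (k + 1) : ℝ) / lam ^ (k + 1) := by
  rw [S, ← sum_range_reflect, mul_sum]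
  refine sum_congr rfl fun k hk => ?_
  have hk : k + 1 ≤ M := mem_range.1 hk
  obtain ⟨j, rfl⟩ := Nat.exists_eq_add_of_le hk
  have hfac := Nat.factorial_mul_descFactorial hk
  rw [show k + 1 + j - 1 - k = j by omega, show k + 1 + j - (k + 1) = j by omega] at *
  have hD : ((k + 1 + j).descFactorial (k + 1) : ℝ) ≠ 0 :=
    Nat.cast_ne_zero.2 (Nat.descFactorial_eq_zero_iff_lt.not.2 (by omega))
  rw [← hfac, pow_add]
  push_cast
  field_simp

lemma S_le (M : ℕ) {lam : ℝ} (hM : (M : ℝ) < lam) :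
    S M lam ≤ partialSumApprox M lam := by
  have hlam : 0 < lam := (Nat.cast_nonneg M).trans_lt hM
  have hr0 : 0 ≤ (M : ℝ) / lam := by positivity
  have hr1 : (M : ℝ) / lam < 1 := (div_lt_one hlam).2 hM
  rw [S_eq_mul_sum_descFactorial M hlam.ne', partialSumApprox]
  gcongr
  calc ∑ k ∈ range M, (M.descFactorial (k + 1) : ℝ) / lam ^ (k + 1)
      ≤ ∑ k ∈ range M, ((M : ℝ) / lam) ^ (k + 1) := by
        gcongr with k
        rw [div_pow]
        gcongr
        exact_mod_cast Nat.descFactorial_le_pow M (k + 1)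
    _ = (M / lam) * ∑ k ∈ Ico 0 M, ((M : ℝ) / lam) ^ k := by
        rw [← range_eq_Ico, mul_sum]
        exact sum_congr rfl fun _ _ => pow_succ' _ _
    _ ≤ (M / lam) * (((M : ℝ) / lam) ^ 0 / (1 - M / lam)) := by
        gcongr
        exact geom_sum_Ico_le_of_lt_one hr0 hr1
    _ = M / (lam - M) := by
        field_simp

lemma mul_geom_sum_le_S {M K : ℕ} (hK : K ≤ M) {lam : ℝ} (hlam : 0 < lam) :
    lam ^ M / M ! * ∑ k ∈ range K, (((M : ℝ) - K) / lam) ^ (k + 1) ≤ S M lam := by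
  rw [S_eq_mul_sum_descFactorial M hlam.ne']
  gcongr
  calc ∑ k ∈ range K, (((M : ℝ) - K) / lam) ^ (k + 1)
      ≤ ∑ k ∈ range K, (M.descFactorial (k + 1) : ℝ) / lam ^ (k + 1) := by
        gcongr with k hk
        rw [div_pow]
        gcongr
        calc ((M : ℝ) - K) ^ (k + 1) ≤ ((M + 1 - (k + 1) : ℕ) : ℝ) ^ (k + 1) := by
              have hkK : k < K := mem_range.1 hk
              have : (k : ℝ) < K := by exact_mod_cast hkK
              gcongr
              · exact sub_nonneg.2 (by exact_mod_cast hK)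
              rw [Nat.cast_sub (by omega)]; push_cast; linarith
          _ ≤ _ := by exact_mod_cast Nat.pow_sub_le_descFactorial M (k + 1)
    _ ≤ ∑ k ∈ range M, (M.descFactorial (k + 1) : ℝ) / lam ^ (k + 1) :=
        sum_le_sum_of_subset_of_nonneg (range_subset_range.2 hK) fun _ _ _ => by positivity

lemma le_S_div {M K : ℕ} (hM : 0 < M) (hK : K ≤ M) {d : ℝ} (hd : 0 < d) :
    (1 - (((M : ℝ) - K) / (M + d)) ^ K) * (((M : ℝ) - K) / M) * (d / (d + K)) ≤
      S M (M + d) / partialSumApprox M (M + d) := by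
  have hlam : 0 < (M : ℝ) + d := by positivity
  set r := ((M : ℝ) - K) / (M + d) with hr_def
  have hr1 : r - 1 = -(d + K) / (M + d) := by rw [hr_def]; field_simp; ring
  have hrM : r * (M + d) = M - K := by rw [hr_def]; field_simp
  have hgeom : ∑ k ∈ range K, r ^ (k + 1) = r * ((r ^ K - 1) / (r - 1)) := by
    have hr : r ≠ 1 := sub_ne_zero.1 (hr1 ▸ (div_neg_of_neg_of_pos (by linarith) hlam).ne)
    rw [← geom_sum_eq hr, mul_sum]
    exact sum_congr rfl fun _ _ => pow_succ' _ _
  rw [partialSumApprox, add_sub_cancel_left, le_div_iff₀ (by positivity)]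
  refine le_trans (le_of_eq ?_) (mul_geom_sum_le_S hK hlam)
  rw [hgeom, hr1]
  clear_value r
  field_simp
  linear_combination (r ^ K - 1) * hrM

lemma pow_le_exp_neg_mul {r : ℝ} (hr : 0 ≤ r) (K : ℕ) : r ^ K ≤ exp (-((1 - r) * K)) := by
  calc r ^ K ≤ exp (r - 1) ^ K := by
        gcongr
        linarith [add_one_le_exp (r - 1)]
    _ = exp (-((1 - r) * K)) := by rw [← exp_nat_mul]; ring_nf

lemma sub_div_add_pow_le_exp {M K : ℕ} (hK : K ≤ M) {d : ℝ} (hd : 0 < d) :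
    (((M : ℝ) - K) / (M + d)) ^ K ≤ exp (-(K * d / (M + d))) := by
  have hlam : 0 < (M : ℝ) + d := by positivity
  have hr0 : 0 ≤ ((M : ℝ) - K) / (M + d) := div_nonneg (sub_nonneg.2 (by exact_mod_cast hK)) hlam.le
  refine (pow_le_exp_neg_mul hr0 K).trans (exp_le_exp.2 (neg_le_neg ?_))
  rw [one_sub_div hlam.ne', div_mul_eq_mul_div, div_le_div_iff_of_pos_right hlam]
  nlinarith [K.cast_nonneg (α := ℝ)]

lemma le_S_div_of_four_le {M : ℕ} (hM : 4 ≤ M) {x : ℝ} (hx : 2 ≤ x) :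
    (1 - exp (-(x / (1 + x / √M)))) * (1 - 2 / √M) * (1 - 2 / x) ≤
      S M (M + √M * x) / partialSumApprox M (M + √M * x) := by
  set s := √(M : ℝ)
  have hsM : s ^ 2 = M := sq_sqrt M.cast_nonneg
  have hs2 : 2 ≤ s := (le_sqrt' two_pos).2 (by norm_num; exact_mod_cast hM)
  -- `K ≈ √M` makes both the truncation error `exp (-K d / λ)` and the loss `K / d` small,
  -- where `d = √M x` and `λ = M + d`.
  set K := ⌈s⌉₊
  have hsK : s ≤ K := Nat.le_ceil s
  have hK2s : (K : ℝ) ≤ 2 * s := by linarith [Nat.ceil_lt_add_one (by linarith : 0 ≤ s)]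
  have hKM : K ≤ M := Nat.ceil_le.2 (by nlinarith)
  have hM0 : (0 : ℝ) < M := by rw [← hsM]; positivity
  have hd : 0 < s * x := by positivity
  refine le_trans ?_ (le_S_div (by omega) hKM hd)
  have hexp : 1 - exp (-(x / (1 + x / s))) ≤ 1 - (((M : ℝ) - K) / (M + s * x)) ^ K := by
    refine sub_le_sub_left ((sub_div_add_pow_le_exp hKM hd).trans (exp_le_exp.2 (neg_le_neg ?_))) 1
    calc x / (1 + x / s) = s * (s * x) / (M + s * x) := by rw [← hsM]; field_simp
      _ ≤ K * (s * x) / (M + s * x) := by gcongr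
  have hK_div_M : 1 - 2 / s ≤ ((M : ℝ) - K) / M := by
    calc 1 - 2 / s = 1 - 2 * s / M := by rw [← hsM]; field_simp
      _ ≤ 1 - K / M := by gcongr
      _ = ((M : ℝ) - K) / M := by field_simp
  have hK_div_d : 1 - 2 / x ≤ s * x / (s * x + K) := by
    calc 1 - 2 / x = 1 - 2 * s / (s * x) := by field_simp
      _ ≤ 1 - K / (s * x + K) := by gcongr; linarith
      _ = s * x / (s * x + K) := by field_simp; ring
  have h2s : 0 ≤ 1 - 2 / s := by rw [sub_nonneg, div_le_one (by positivity)]; exact hs2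
  have hexp0 : 0 ≤ 1 - exp (-(x / (1 + x / s))) :=
    sub_nonneg.2 (exp_le_one_iff.2 (neg_nonpos.2 (by positivity)))
  have hKM0 : 0 ≤ ((M : ℝ) - K) / M := div_nonneg (sub_nonneg.2 (by exact_mod_cast hKM)) hM0.le
  exact mul_le_mul_of_nonneg (mul_le_mul_of_nonneg hexp hK_div_M hexp0 hKM0) hK_div_d
    (mul_nonneg hexp0 h2s) (by positivity)

lemma partialSumApprox_mul_exp_div_gaussian {M : ℕ} (hM : 0 < M) {x : ℝ} (hx : x ≠ 0) :
    partialSumApprox M (M + √M * x) * exp (-(M + √M * x)) /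
        (exp (-(x ^ 2 / 2)) / (x * √(2 * π))) =
      √π / Stirling.stirlingSeq M * ((1 + x / √M) ^ M * exp (x ^ 2 / 2 - √M * x)) := by
  rw [partialSumApprox, add_sub_cancel_left, Stirling.stirlingSeq, exp_neg, exp_neg, exp_sub,
    sqrt_mul zero_le_two, sqrt_mul zero_le_two, div_pow, exp_one_pow, exp_add]
  set s := √(M : ℝ)
  have hs : 0 < s := by positivity
  have hsM : (M : ℝ) = s ^ 2 := (sq_sqrt M.cast_nonneg).symm
  have hlam : (M : ℝ) + s * x = M * (1 + x / s) := by rw [hsM]; field_simp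
  rw [hlam, mul_pow]
  field_simp
  rw [hsM]
  ring

/-- In the statement, `λ(n) = m + √m · gaussLevel y (log n)`. -/
noncomputable def gaussLevel (y L : ℝ) : ℝ := √(2 * L - log L) + y / √(2 * L)

lemma gaussLevel_eq (y : ℝ) {L : ℝ} (hL : 0 < L) :
    gaussLevel y L = √(2 * L) * (√(1 - log L / (2 * L)) + y / (2 * L)) := by
  have hsq : √(2 * L) * √(2 * L) = 2 * L := mul_self_sqrt (by positivity)
  rw [gaussLevel, mul_add, ← sqrt_mul (by positivity), mul_sub, mul_div_cancel₀ _ (by positivity),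
    mul_one]
  field_simp
  linear_combination (-y) * hsq

lemma tendsto_sqrt_one_sub_log_div : Tendsto (fun L => √(1 - log L / (2 * L))) atTop (𝓝 1) := by
  have hlog : Tendsto (fun L => log L / (2 * L)) atTop (𝓝 0) := by
    simpa using tendsto_pow_log_div_mul_add_atTop 2 0 1 two_ne_zero
  simpa [Function.comp_def] using
    (continuous_sqrt.tendsto _).comp ((tendsto_const_nhds (x := (1 : ℝ))).sub hlog)

lemma tendsto_gaussLevel_div_sqrt (y : ℝ) :
    Tendsto (fun L => gaussLevel y L / √(2 * L)) atTop (𝓝 1) := by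
  have hy : Tendsto (fun L => y / (2 * L)) atTop (𝓝 0) :=
    tendsto_const_nhds.div_atTop (tendsto_id.const_mul_atTop two_pos)
  refine (by simpa using tendsto_sqrt_one_sub_log_div.add hy :
    Tendsto (fun L => √(1 - log L / (2 * L)) + y / (2 * L)) atTop (𝓝 1)).congr' ?_
  filter_upwards [eventually_gt_atTop 0] with L hL
  rw [gaussLevel_eq y hL, mul_div_cancel_left₀ _ (by positivity)]

lemma tendsto_gaussLevel_atTop (y : ℝ) : Tendsto (gaussLevel y) atTop atTop := by
  refine ((tendsto_gaussLevel_div_sqrt y).pos_mul_atTop one_pos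
    (tendsto_sqrt_atTop.comp (tendsto_id.const_mul_atTop two_pos))).congr' ?_
  filter_upwards [eventually_gt_atTop 0] with L hL
  exact div_mul_cancel₀ _ (by positivity)

lemma exp_mul_gaussian_gaussLevel (y : ℝ) {L : ℝ} (hL : 0 < L) :
    exp L * (exp (-(gaussLevel y L ^ 2 / 2)) / (gaussLevel y L * √(2 * π))) =
      exp (-(y * √(1 - log L / (2 * L)) + y ^ 2 / (4 * L))) /
        (2 * √π * (√(1 - log L / (2 * L)) + y / (2 * L))) := by
  rw [gaussLevel_eq y hL]
  set R := √(1 - log L / (2 * L))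
  have hR : 2 * L * R ^ 2 = 2 * L - log L := by
    have hlog : log L / (2 * L) ≤ 1 :=
      (div_le_one (by positivity)).2 (by linarith [log_le_sub_one_of_pos hL])
    rw [sq_sqrt (sub_nonneg.2 hlog)]
    field_simp
  have hexp : exp L * exp (-((√(2 * L) * (R + y / (2 * L))) ^ 2 / 2)) =
      √L * exp (-(y * R + y ^ 2 / (4 * L))) := by
    rw [show √L = exp (log L / 2) by rw [exp_half, exp_log hL], ← exp_add, ← exp_add, mul_pow,
      sq_sqrt (by positivity)]
    congr 1
    field_simp
    linear_combination (-8 * L) * hR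
  rw [← mul_div_assoc, hexp, sqrt_mul zero_le_two, sqrt_mul zero_le_two]
  by_cases hW : R + y / (2 * L) = 0
  · simp [hW]
  field_simp
  rw [sq_sqrt zero_le_two]

lemma tendsto_exp_mul_gaussian_gaussLevel (y : ℝ) :
    Tendsto (fun L => exp L * (exp (-(gaussLevel y L ^ 2 / 2)) / (gaussLevel y L * √(2 * π))))
      atTop (𝓝 (exp (-y) / (2 * √π))) := by
  have hR := tendsto_sqrt_one_sub_log_div
  have hy : Tendsto (fun L => y / (2 * L)) atTop (𝓝 0) :=
    tendsto_const_nhds.div_atTop (tendsto_id.const_mul_atTop two_pos)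
  have hy2 : Tendsto (fun L => y ^ 2 / (4 * L)) atTop (𝓝 0) :=
    tendsto_const_nhds.div_atTop (tendsto_id.const_mul_atTop four_pos)
  have hnum : Tendsto (fun L => exp (-(y * √(1 - log L / (2 * L)) + y ^ 2 / (4 * L)))) atTop
      (𝓝 (exp (-y))) := by
    simpa [Function.comp_def] using (continuous_exp.tendsto _).comp ((hR.const_mul y).add hy2).neg
  have hden : Tendsto (fun L => 2 * √π * (√(1 - log L / (2 * L)) + y / (2 * L))) atTop
      (𝓝 (2 * √π)) := by
    simpa using (hR.add hy).const_mul (2 * √π)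
  refine (hnum.div hden (by positivity)).congr' ?_
  filter_upwards [eventually_gt_atTop 0] with L hL
  exact (exp_mul_gaussian_gaussLevel y hL).symm

section Asymptotics

variable {ι : Type*} {l : Filter ι}

lemma tendsto_mul_log_one_add_sub_add {a u : ι → ℝ} (hu : Tendsto u l (𝓝 0))
    (hau : Tendsto (fun i => a i * u i ^ 3) l (𝓝 0)) :
    Tendsto (fun i => a i * (log (1 + u i) - u i + u i ^ 2 / 2)) l (𝓝 0) := by
  refine squeeze_zero_norm' ?_ (by simpa using (hau.norm.const_mul 2))
  filter_upwards [(by simpa using hu.norm : Tendsto (fun i => |u i|) l (𝓝 0)).eventually_le_const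
    (by norm_num : (0 : ℝ) < 1 / 2)] with i hui
  have htaylor := abs_log_sub_add_sum_range_le (x := -u i) (by rw [abs_neg]; linarith) 2
  simp only [sum_range_succ, sum_range_zero, abs_neg] at htaylor
  norm_num at htaylor
  have hcube : |u i| ^ 3 / (1 - |u i|) ≤ 2 * |u i| ^ 3 := by
    rw [div_le_iff₀ (by linarith)]
    nlinarith [pow_nonneg (abs_nonneg (u i)) 3]
  rw [norm_mul, norm_eq_abs, norm_eq_abs, show log (1 + u i) - u i + u i ^ 2 / 2 =
    -u i + u i ^ 2 / 2 + log (1 + u i) by ring]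
  calc |a i| * |-u i + u i ^ 2 / 2 + log (1 + u i)| ≤ |a i| * (2 * |u i| ^ 3) := by
        gcongr; exact htaylor.trans hcube
    _ = 2 * (|a i| * |u i| ^ 3) := by ring

lemma tendsto_gaussLevel_pow_three_div_sqrt (y : ℝ) {L N : ι → ℝ} (hL : Tendsto L l atTop)
    (hLN : Tendsto (fun i => L i ^ 3 / N i) l (𝓝 0)) :
    Tendsto (fun i => gaussLevel y (L i) ^ 3 / √(N i)) l (𝓝 0) := by
  have h := (((tendsto_gaussLevel_div_sqrt y).comp hL).pow 3).mul
    ((continuous_sqrt.tendsto _).comp (hLN.const_mul 8))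
  simp only [mul_zero, sqrt_zero] at h
  refine h.congr' ?_
  filter_upwards [hL.eventually_gt_atTop 0] with i hi
  have hcube : √(8 * L i ^ 3) = √(2 * L i) ^ 3 := by
    rw [show 8 * L i ^ 3 = (2 * L i) ^ 2 * (2 * L i) by ring, sqrt_mul (by positivity),
      sqrt_sq (by positivity), pow_succ, sq_sqrt (by positivity)]
  simp only [Function.comp_apply]
  rw [← mul_div_assoc, sqrt_div (by positivity), hcube]
  field_simp

variable {M : ι → ℕ} {x : ι → ℝ}

theorem tendsto_S_div_partialSumApprox (hM : Tendsto M l atTop) (hx : Tendsto x l atTop)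
    (hxM : Tendsto (fun i => x i / √(M i)) l (𝓝 0)) :
    Tendsto (fun i => S (M i) (M i + √(M i) * x i) / partialSumApprox (M i) (M i + √(M i) * x i))
      l (𝓝 1) := by
  have hs : Tendsto (fun i => √(M i : ℝ)) l atTop :=
    tendsto_sqrt_atTop.comp (tendsto_natCast_atTop_atTop.comp hM)
  have hexp : Tendsto (fun i => exp (-(x i / (1 + x i / √(M i))))) l (𝓝 0) := by
    refine tendsto_exp_neg_atTop_nhds_zero.comp ?_
    have hinv : Tendsto (fun i => (1 + x i / √(M i))⁻¹) l (𝓝 1) := by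
      simpa using (hxM.const_add 1).inv₀ (by norm_num)
    exact (hx.atTop_mul_pos one_pos hinv).congr fun i => (div_eq_mul_inv _ _).symm
  have hlow := (((tendsto_const_nhds (x := (1 : ℝ))).sub hexp).mul
    ((tendsto_const_nhds (x := (1 : ℝ))).sub (hs.const_div_atTop 2))).mul
    ((tendsto_const_nhds (x := (1 : ℝ))).sub (hx.const_div_atTop 2))
  simp only [sub_zero, mul_one] at hlow
  refine tendsto_of_tendsto_of_tendsto_of_le_of_le' hlow tendsto_const_nhds ?_ ?_
  · filter_upwards [hM.eventually_ge_atTop 4, hx.eventually_ge_atTop 2] with i hMi hxi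
    exact le_S_div_of_four_le hMi hxi
  · filter_upwards [hM.eventually_ge_atTop 1, hx.eventually_gt_atTop 0] with i hMi hxi
    have hd : 0 < √(M i : ℝ) * x i := by positivity
    refine div_le_one_of_le₀ (S_le (M i) (lt_add_of_pos_right _ hd)) ?_
    rw [partialSumApprox, add_sub_cancel_left]
    positivity

theorem tendsto_one_add_div_sqrt_pow_mul_exp (hM : Tendsto M l atTop)
    (hxM : Tendsto (fun i => x i / √(M i)) l (𝓝 0))
    (hx3 : Tendsto (fun i => x i ^ 3 / √(M i)) l (𝓝 0)) :
    Tendsto (fun i => (1 + x i / √(M i)) ^ M i * exp (x i ^ 2 / 2 - √(M i) * x i)) l (𝓝 1) := by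
  have hcube : Tendsto (fun i => (M i : ℝ) * (x i / √(M i)) ^ 3) l (𝓝 0) := by
    refine hx3.congr' ?_
    filter_upwards [hM.eventually_gt_atTop 0] with i hMi
    set s := √(M i : ℝ)
    have hsM : (M i : ℝ) = s ^ 2 := (sq_sqrt (M i).cast_nonneg).symm
    rw [hsM]
    field_simp
  have hlog := tendsto_mul_log_one_add_sub_add hxM hcube
  refine (tendsto_exp_nhds_zero_nhds_one.comp hlog).congr' ?_
  filter_upwards [hM.eventually_gt_atTop 0, hxM.eventually_const_lt (by norm_num : (-1 : ℝ) < 0)]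
    with i hMi hu
  have hexponent : (M i : ℝ) * (log (1 + x i / √(M i)) - x i / √(M i) + (x i / √(M i)) ^ 2 / 2) =
      M i * log (1 + x i / √(M i)) + (x i ^ 2 / 2 - √(M i) * x i) := by
    set s := √(M i : ℝ)
    have hs : 0 < s := by positivity
    have hsM : (M i : ℝ) = s ^ 2 := (sq_sqrt (M i).cast_nonneg).symm
    rw [hsM]
    field_simp
    ring
  rw [Function.comp_apply, hexponent, exp_add, exp_nat_mul, exp_log (by linarith)]

theorem tendsto_S_mul_exp_div_gaussian (hM : Tendsto M l atTop) (hx : Tendsto x l atTop)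
    (hx3 : Tendsto (fun i => x i ^ 3 / √(M i)) l (𝓝 0)) :
    Tendsto (fun i => S (M i) (M i + √(M i) * x i) * exp (-(M i + √(M i) * x i)) /
      (exp (-(x i ^ 2 / 2)) / (x i * √(2 * π)))) l (𝓝 1) := by
  have hxM : Tendsto (fun i => x i / √(M i)) l (𝓝 0) := by
    refine squeeze_zero' ?_ ?_ hx3
    · filter_upwards [hx.eventually_ge_atTop 0] with i hxi
      positivity
    · filter_upwards [hx.eventually_ge_atTop 1] with i hxi
      gcongr
      exact le_self_pow₀ hxi (by norm_num)
  have hstirling : Tendsto (fun i => √π / Stirling.stirlingSeq (M i)) l (𝓝 1) := by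
    have hπ : √π ≠ 0 := (sqrt_pos.2 pi_pos).ne'
    have h := (tendsto_const_nhds (x := √π)).div (Stirling.tendsto_stirlingSeq_sqrt_pi.comp hM) hπ
    rwa [div_self hπ] at h
  have := (tendsto_S_div_partialSumApprox hM hx hxM).mul
    (hstirling.mul (tendsto_one_add_div_sqrt_pow_mul_exp hM hxM hx3))
  rw [mul_one, mul_one] at this
  refine this.congr' ?_
  filter_upwards [hM.eventually_gt_atTop 0, hx.eventually_gt_atTop 0] with i hMi hxi
  have hT : partialSumApprox (M i) (M i + √(M i) * x i) ≠ 0 := by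
    rw [partialSumApprox, add_sub_cancel_left]
    positivity
  rw [← partialSumApprox_mul_exp_div_gaussian hMi hxi.ne']
  field_simp

end Asymptotics

/-- Supercritical case `m ≫ (ln n)³`: with
`λ(n) = m + √m √(2 ln n − ln ln n) + (√m/√(2 ln n)) y`, one has
`n S_m(λ) e^{−λ} → e^{−y}/(2√π)`, i.e. `S_m(λ) e^{−λ} ∼ (1/n) e^{−y}/(2√π)`. -/
theorem stmt7 (m : ℕ → ℕ) (hm : ∀ n, 0 < m n)
    (hgrow : Tendsto (fun n : ℕ => (Real.log n) ^ 3 / (m n : ℝ)) atTop (nhds 0))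
    (y : ℝ) :
    Tendsto (fun n : ℕ =>
        (n : ℝ) * S (m n)
            ((m n : ℝ) + Real.sqrt (m n) * Real.sqrt (2 * Real.log n - Real.log (Real.log n))
              + Real.sqrt (m n) / Real.sqrt (2 * Real.log n) * y)
          * Real.exp
            (-((m n : ℝ) + Real.sqrt (m n) * Real.sqrt (2 * Real.log n - Real.log (Real.log n))
              + Real.sqrt (m n) / Real.sqrt (2 * Real.log n) * y)))
      atTop (nhds (Real.exp (-y) / (2 * Real.sqrt π))) := by
  have hL : Tendsto (fun n : ℕ => log n) atTop atTop :=
    tendsto_log_atTop.comp tendsto_natCast_atTop_atTop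
  have hm_atTop : Tendsto m atTop atTop := by
    refine tendsto_natCast_atTop_iff.1
      (tendsto_atTop_mono' _ ?_ ((tendsto_pow_atTop three_ne_zero).comp hL))
    filter_upwards [hgrow.eventually_lt_const one_pos] with n hn
    exact ((div_lt_one (by exact_mod_cast hm n)).1 hn).le
  have hx := (tendsto_gaussLevel_atTop y).comp hL
  have hlim := (tendsto_S_mul_exp_div_gaussian hm_atTop hx
    (tendsto_gaussLevel_pow_three_div_sqrt y hL hgrow)).mul
    ((tendsto_exp_mul_gaussian_gaussLevel y).comp hL)
  rw [one_mul] at hlim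
  refine hlim.congr' ?_
  filter_upwards [eventually_gt_atTop 0, hx.eventually_gt_atTop 0] with n hn hxn
  have hlam : (m n : ℝ) + √(m n) * gaussLevel y (log n) = m n + √(m n) * √(2 * log n - log (log n))
      + √(m n) / √(2 * log n) * y := by
    rw [gaussLevel]; ring
  simp only [Function.comp_apply] at hxn ⊢
  rw [exp_log (by exact_mod_cast hn), hlam]
  field_simp
end

section
/- Let β > 0 be fixed, let α be the unique solution in (β, ∞) of α − β·ln α = β − β·ln β + 1, and let m = m(n) = β·ln n + b(n)·ln n be a sequence of positive integers with b(n)·√(ln n) → 0 as n → ∞. For a fixed real y, set χ(n) := α·ln n + (α(α−β−1)/(β(α−β)))·b(n)·ln n − (α/(2(α−β)))·ln ln n + (α/(α−β))·y. Then [1 − S_m(χ(n))·e^{−χ(n)}]^n → exp( −(1/√(2π))·(√β/(α−β))·e^{−y} ) as n → ∞. Equivalently, for the maximum Δ_{m,n} of n independent Erlang(m,1/n) random variables: P{(Δ_{m,n} − α·n·ln n − (α(α−β−1)/(β(α−β)))·b(n)·n·ln n + (α/(2(α−β)))·n·ln ln n)/((α/(α−β))·n) ≤ y} → exp(−(1/√(2π))·(√β/(α−β))·e^{−y}).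 -/
open MeasureTheory Filter Real

/-!
With `L = ln n` and `k = m - 1`, reversing the order of summation gives
`S_m(χ) = (χ^k / k!) · ∑_{j<m} k(k-1)⋯(k-j+1) / χ^j`, and since `m / χ → β / α < 1` the sum
tends to `α / (α - β)` by dominated convergence. By Stirling's formula and the second-order
expansion of the homogeneous function `(x, z) ↦ z ln (x / z)` at `(αL, βL)`, the logarithm of
`n e^{-χ} χ^k / k!` is, up to `o(1)`, a linear combination of `L`, `χ - αL`, `k - βL`, `ln L` and
constants. The equation defining `α` kills the term of order `L`, and the coefficients of `χ` are
chosen so that the terms of order `b(n) L` and `ln L` cancel as well. Hence `n S_m(χ) e^{-χ}`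
converges to `(1/√(2π)) (√β/(α-β)) e^{-y}`, and `(1 - c_n / n)^n → e^{-c}` finishes the proof.
-/

open Topology Finset

section Asymptotics

variable {ι : Type*} {l : Filter ι}

lemma abs_log_one_add_sub_self_le {t : ℝ} (ht : -1 / 2 ≤ t) : |log (1 + t) - t| ≤ 2 * t ^ 2 := by
  have h1 : 0 < 1 + t := by linarith
  have hupper : log (1 + t) ≤ t := by linarith [log_le_sub_one_of_pos h1]
  have hlower : t - t ^ 2 / (1 + t) ≤ log (1 + t) :=
    calc t - t ^ 2 / (1 + t) = 1 - (1 + t)⁻¹ := by field_simp; ring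
      _ ≤ log (1 + t) := one_sub_inv_le_log_of_pos h1
  have hquad : t ^ 2 / (1 + t) ≤ 2 * t ^ 2 := by
    rw [div_le_iff₀ h1]; nlinarith [sq_nonneg t]
  rw [abs_sub_comm, abs_of_nonneg (by linarith)]
  linarith

lemma tendsto_mul_log_one_add_sub_self {w t : ι → ℝ} (ht : Tendsto t l (𝓝 0))
    (hwt : Tendsto (fun i => w i * t i ^ 2) l (𝓝 0)) :
    Tendsto (fun i => w i * (log (1 + t i) - t i)) l (𝓝 0) := by
  have hbound : Tendsto (fun i => 2 * |w i * t i ^ 2|) l (𝓝 0) := by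
    simpa using hwt.abs.const_mul 2
  refine squeeze_zero_norm' ?_ hbound
  filter_upwards [ht.eventually (Ici_mem_nhds (by norm_num : (-1 / 2 : ℝ) < 0))] with i hi
  rw [norm_mul, Real.norm_eq_abs, Real.norm_eq_abs, abs_mul, abs_of_nonneg (sq_nonneg (t i))]
  nlinarith [abs_log_one_add_sub_self_le hi, abs_nonneg (w i)]

lemma tendsto_inv_sqrt_of_tendsto_atTop {L : ι → ℝ} (hL : Tendsto L l atTop) :
    Tendsto (fun i => (√(L i))⁻¹) l (𝓝 0) :=
  tendsto_inv_atTop_zero.comp (tendsto_sqrt_atTop.comp hL)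

lemma tendsto_log_div_sqrt_atTop : Tendsto (fun t : ℝ => log t / √t) atTop (𝓝 0) := by
  refine ((isLittleO_log_rpow_atTop (by norm_num : (0 : ℝ) < 1 / 2)).tendsto_div_nhds_zero).congr
    fun t => ?_
  rw [sqrt_eq_rpow]

lemma tendsto_div_of_tendsto_sub_div_sqrt {L x : ι → ℝ} {a : ℝ} (hL : Tendsto L l atTop)
    (hx : Tendsto (fun i => (x i - a * L i) / √(L i)) l (𝓝 0)) :
    Tendsto (fun i => x i / L i) l (𝓝 a) := by
  have h := (hx.mul (tendsto_inv_sqrt_of_tendsto_atTop hL)).const_add a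
  rw [mul_zero, add_zero] at h
  refine h.congr' ?_
  filter_upwards [hL.eventually_gt_atTop 0] with i hi
  have hs : √(L i) ^ 2 = L i := sq_sqrt hi.le
  field_simp
  rw [hs]
  ring

lemma tendsto_atTop_of_tendsto_sub_div_sqrt {L x : ι → ℝ} {a : ℝ} (ha : 0 < a)
    (hL : Tendsto L l atTop) (hx : Tendsto (fun i => (x i - a * L i) / √(L i)) l (𝓝 0)) :
    Tendsto x l atTop := by
  refine ((tendsto_div_of_tendsto_sub_div_sqrt hL hx).pos_mul_atTop ha hL).congr' ?_
  filter_upwards [hL.eventually_gt_atTop 0] with i hi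
  field_simp

/-- Second-order expansion of `(x, z) ↦ z log (x / z)` at `(αL, βL)`: the quadratic remainder is
`o(1)` because both displacements are `o(√L)`. -/
lemma tendsto_mul_log_div_sub_linear {α β : ℝ} (hα : 0 < α) (hβ : 0 < β) {L x z : ι → ℝ}
    (hL : Tendsto L l atTop)
    (hx : Tendsto (fun i => (x i - α * L i) / √(L i)) l (𝓝 0))
    (hz : Tendsto (fun i => (z i - β * L i) / √(L i)) l (𝓝 0)) :
    Tendsto (fun i => z i * log (x i / z i)
      - (z i * log (α / β) + β / α * (x i - α * L i) - (z i - β * L i))) l (𝓝 0) := by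
  have hxL := tendsto_div_of_tendsto_sub_div_sqrt hL hx
  have hzL := tendsto_div_of_tendsto_sub_div_sqrt hL hz
  have hsmall {c : ℝ} (hc : 0 < c) {v : ι → ℝ} (hv : Tendsto (fun i => v i / L i) l (𝓝 c)) :
      Tendsto (fun i => v i / (c * L i) - 1) l (𝓝 0) := by
    have h := (hv.div_const c).sub_const 1
    rw [div_self hc.ne', sub_self] at h
    refine h.congr fun i => ?_
    rw [div_div, mul_comm]
  have hquad {c : ℝ} (hc : 0 < c) {v : ι → ℝ}
      (hv : Tendsto (fun i => (v i - c * L i) / √(L i)) l (𝓝 0)) :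
      Tendsto (fun i => z i * (v i / (c * L i) - 1) ^ 2) l (𝓝 0) := by
    have h := (hzL.mul (hv.pow 2)).div_const (c ^ 2)
    rw [zero_pow two_ne_zero, mul_zero, zero_div] at h
    refine h.congr' ?_
    filter_upwards [hL.eventually_gt_atTop 0] with i hi
    have hs : √(L i) ^ 2 = L i := sq_sqrt hi.le
    field_simp
    rw [hs]
    ring
  have hR := (tendsto_mul_log_one_add_sub_self (hsmall hα hxL) (hquad hα hx)).sub
    (tendsto_mul_log_one_add_sub_self (hsmall hβ hzL) (hquad hβ hz))
  have hcross := ((hx.mul hz).div_const α).sub ((hz.mul hz).div_const β)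
  have h := hR.add hcross
  simp only [mul_zero, zero_div, sub_zero, add_zero] at h
  refine h.congr' ?_
  filter_upwards [hL.eventually_gt_atTop 0, hxL.eventually (eventually_gt_nhds hα),
    hzL.eventually (eventually_gt_nhds hβ)] with i hi hxi hzi
  have hx0 : 0 < x i := (div_pos_iff_of_pos_right hi).mp hxi
  have hz0 : 0 < z i := (div_pos_iff_of_pos_right hi).mp hzi
  have hs : √(L i) ^ 2 = L i := sq_sqrt hi.le
  have hlog : log (x i / z i) = log (α / β) + log (x i / (α * L i)) - log (z i / (β * L i)) := by
    rw [log_div hx0.ne' hz0.ne', log_div hα.ne' hβ.ne', log_div hx0.ne' (by positivity),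
      log_div hz0.ne' (by positivity), log_mul hα.ne' hi.ne', log_mul hβ.ne' hi.ne']
    ring
  simp only [add_sub_cancel, hlog]
  field_simp
  rw [hs]
  ring

lemma tendsto_log_factorial_sub_stirling :
    Tendsto (fun k : ℕ => log k.factorial - (k * log k - k + log (2 * π * k) / 2)) atTop (𝓝 0) := by
  have hratio := (Asymptotics.isEquivalent_iff_tendsto_one
    ((eventually_gt_atTop 0).mono fun k hk => by
      have : (0 : ℝ) < k := by exact_mod_cast hk
      positivity)).mp Stirling.factorial_isEquivalent_stirling
  have h := ((continuousAt_log one_ne_zero).tendsto.comp hratio)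
  rw [log_one] at h
  refine h.congr' ?_
  filter_upwards [eventually_gt_atTop 0] with k hk
  have hk' : (0 : ℝ) < k := by exact_mod_cast hk
  simp only [Function.comp_apply, Pi.div_apply]
  rw [log_div (by positivity) (by positivity), log_mul (by positivity) (by positivity), log_pow,
    log_sqrt (by positivity), log_div hk'.ne' (exp_pos 1).ne', log_exp]
  ring_nf

/-- The left side is the logarithm of `e^L · e^{-x} x^k / k!`. The hypothesis `hP` cancels its
terms of order `L`; what survives is governed by the combination in `hc`. -/
lemma tendsto_log_poisson_term {α β c : ℝ} (hα : 0 < α) (hβ : 0 < β)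
    (hP : β * log (α / β) = α - β - 1) {L x : ι → ℝ} {k : ι → ℕ} (hL : Tendsto L l atTop)
    (hx : Tendsto (fun i => (x i - α * L i) / √(L i)) l (𝓝 0))
    (hk : Tendsto (fun i => (k i - β * L i) / √(L i)) l (𝓝 0))
    (hc : Tendsto (fun i => (1 - β / α) * (x i - α * L i) - log (α / β) * (k i - β * L i)
      + log (L i) / 2) l (𝓝 c)) :
    Tendsto (fun i => L i - x i + k i * log (x i) - log (k i).factorial) l
      (𝓝 (-c - log (2 * π * β) / 2)) := by
  have hkL := tendsto_div_of_tendsto_sub_div_sqrt hL hk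
  have hk_atTop : Tendsto k l atTop :=
    tendsto_natCast_atTop_iff.mp (tendsto_atTop_of_tendsto_sub_div_sqrt hβ hL hk)
  have hStirling := tendsto_log_factorial_sub_stirling.comp hk_atTop
  have hTaylor := tendsto_mul_log_div_sub_linear hα hβ hL hx hk
  have hlog := (continuousAt_log hβ.ne').tendsto.comp hkL
  have h := (((hTaylor.sub hStirling).sub hc).sub (hlog.div_const 2)).sub_const (log (2 * π) / 2)
  rw [show 0 - 0 - c - log β / 2 - log (2 * π) / 2 = -c - log (2 * π * β) / 2 by
    rw [log_mul (by positivity) hβ.ne']; ring] at h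
  refine h.congr' ?_
  filter_upwards [hL.eventually_gt_atTop 0, hk_atTop.eventually_gt_atTop 0,
    (tendsto_atTop_of_tendsto_sub_div_sqrt hα hL hx).eventually_gt_atTop 0] with i hLi hki hxi
  have hki' : (0 : ℝ) < k i := by exact_mod_cast hki
  simp only [Function.comp_apply]
  rw [log_div hxi.ne' hki'.ne', log_div hki'.ne' hLi.ne', log_mul (by positivity) hki'.ne']
  linear_combination -L i * hP

lemma S_eq_pow_div_factorial_mul_sum (m : ℕ) {x : ℝ} (hx : x ≠ 0) :
    S m x = x ^ (m - 1) / (m - 1).factorial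
      * ∑ j ∈ range m, ((m - 1).descFactorial j : ℝ) / x ^ j := by
  rw [S, ← sum_range_reflect, mul_sum]
  refine sum_congr rfl fun j hj => ?_
  have hjm : j ≤ m - 1 := Nat.le_sub_one_of_lt (mem_range.mp hj)
  have hfact : ((m - 1 - j).factorial : ℝ) * (m - 1).descFactorial j = (m - 1).factorial := by
    exact_mod_cast Nat.factorial_mul_descFactorial hjm
  have hpow : x ^ (m - 1) = x ^ (m - 1 - j) * x ^ j := by rw [← pow_add, Nat.sub_add_cancel hjm]
  have hdesc : ((m - 1).descFactorial j : ℝ) ≠ 0 := by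
    exact_mod_cast Nat.descFactorial_eq_zero_iff_lt.not.mpr hjm.not_gt
  rw [← hfact, hpow]
  field_simp

lemma descFactorial_sub_one_div_pow_le (m j : ℕ) {x : ℝ} (hx : 0 < x) :
    ((m - 1).descFactorial j : ℝ) / x ^ j ≤ ((m : ℝ) / x) ^ j := by
  rw [div_pow]
  gcongr
  exact_mod_cast (Nat.descFactorial_le_pow _ _).trans (Nat.pow_le_pow_left (Nat.sub_le _ _) _)

lemma tendsto_descFactorial_sub_one_div_pow {m : ι → ℕ} {x : ι → ℝ} {ρ : ℝ}
    (hm : Tendsto m l atTop) (hx : Tendsto x l atTop)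
    (hmx : Tendsto (fun i => (m i : ℝ) / x i) l (𝓝 ρ)) (j : ℕ) :
    Tendsto (fun i => ((m i - 1).descFactorial j : ℝ) / x i ^ j) l (𝓝 (ρ ^ j)) := by
  have hlower : Tendsto (fun i => ((m i - j : ℝ) / x i) ^ j) l (𝓝 (ρ ^ j)) := by
    have h := (hmx.sub ((tendsto_inv_atTop_zero.comp hx).const_mul (j : ℝ))).pow j
    rw [mul_zero, sub_zero] at h
    refine h.congr fun i => ?_
    simp only [Function.comp_apply]
    ring
  refine tendsto_of_tendsto_of_tendsto_of_le_of_le' hlower (hmx.pow j) ?_ ?_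
  · filter_upwards [hm.eventually_ge_atTop (j + 1), hx.eventually_gt_atTop 0] with i hmi hxi
    have hcast : ((m i - 1 + 1 - j : ℕ) : ℝ) = m i - j := by
      rw [Nat.sub_add_cancel (by omega), Nat.cast_sub (by omega)]
    rw [div_pow]
    gcongr
    rw [← hcast]
    exact_mod_cast Nat.pow_sub_le_descFactorial _ _
  · filter_upwards [hx.eventually_gt_atTop 0] with i hxi
    exact descFactorial_sub_one_div_pow_le _ _ hxi

lemma tendsto_sum_descFactorial_sub_one_div_pow {m : ι → ℕ} {x : ι → ℝ} {ρ : ℝ} (hρ : ρ < 1)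
    (hm : Tendsto m l atTop) (hx : Tendsto x l atTop)
    (hmx : Tendsto (fun i => (m i : ℝ) / x i) l (𝓝 ρ)) :
    Tendsto (fun i => ∑ j ∈ range (m i), ((m i - 1).descFactorial j : ℝ) / x i ^ j) l
      (𝓝 (1 - ρ)⁻¹) := by
  rcases l.eq_or_neBot with rfl | _
  · exact tendsto_bot
  have hρ0 : 0 ≤ ρ := ge_of_tendsto hmx <| by
    filter_upwards [hx.eventually_gt_atTop 0] with i hxi
    positivity
  obtain ⟨r, hρr, hr1⟩ := exists_between hρ
  rw [← tsum_geometric_of_lt_one hρ0 hρ]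
  have hdom := tendsto_tsum_of_dominated_convergence
    (summable_geometric_of_lt_one (hρ0.trans hρr.le) hr1)
    (tendsto_descFactorial_sub_one_div_pow hm hx hmx) <| by
      filter_upwards [hmx.eventually (eventually_lt_nhds hρr), hx.eventually_gt_atTop 0]
        with i hi hxi j
      rw [norm_of_nonneg (by positivity)]
      exact (descFactorial_sub_one_div_pow_le _ _ hxi).trans
        (pow_le_pow_left₀ (by positivity) hi.le j)
  refine hdom.congr' ?_
  filter_upwards [hm.eventually_ge_atTop 1] with i hmi
  refine tsum_eq_sum fun j hj => ?_
  rw [Nat.descFactorial_eq_zero_iff_lt.mpr (by simp at hj; omega), Nat.cast_zero, zero_div]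

lemma exp_sub_log_mul_inv_one_sub_div {α β : ℝ} (hβ : 0 < β) (hαβ : β < α) (c : ℝ) :
    exp (-(c + log (α / β)) - log (2 * π * β) / 2) * (1 - β / α)⁻¹
      = 1 / √(2 * π) * (√β / (α - β)) * exp (-c) := by
  have hα : 0 < α := hβ.trans hαβ
  have hsqrt : √β ^ 2 = β := sq_sqrt hβ.le
  rw [← log_sqrt (by positivity), exp_sub, neg_add, exp_add, exp_neg (log _),
    exp_log (div_pos hα hβ), exp_log (by positivity), sqrt_mul' _ hβ.le]
  field_simp
  rw [hsqrt]

lemma tendsto_exp_mul_S_mul_exp_neg {α β c : ℝ} (hβ : 0 < β) (hαβ : β < α)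
    (hP : β * log (α / β) = α - β - 1) {L x : ι → ℝ} {m : ι → ℕ} (hL : Tendsto L l atTop)
    (hx : Tendsto (fun i => (x i - α * L i) / √(L i)) l (𝓝 0))
    (hm : Tendsto (fun i => (m i - β * L i) / √(L i)) l (𝓝 0))
    (hc : Tendsto (fun i => (1 - β / α) * (x i - α * L i) - log (α / β) * (m i - β * L i)
      + log (L i) / 2) l (𝓝 c)) :
    Tendsto (fun i => exp (L i) * (S (m i) (x i) * exp (-x i))) l
      (𝓝 (1 / √(2 * π) * (√β / (α - β)) * exp (-c))) := by
  have hα : 0 < α := hβ.trans hαβ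
  have hm_atTop : Tendsto m l atTop :=
    tendsto_natCast_atTop_iff.mp (tendsto_atTop_of_tendsto_sub_div_sqrt hβ hL hm)
  have hx_atTop := tendsto_atTop_of_tendsto_sub_div_sqrt hα hL hx
  have hmx : Tendsto (fun i => (m i : ℝ) / x i) l (𝓝 (β / α)) := by
    refine ((tendsto_div_of_tendsto_sub_div_sqrt hL hm).div
      (tendsto_div_of_tendsto_sub_div_sqrt hL hx) hα.ne').congr' ?_
    filter_upwards [hL.eventually_gt_atTop 0] with i hi
    exact div_div_div_cancel_right₀ hi.ne' _ _
  have hsum := tendsto_sum_descFactorial_sub_one_div_pow ((div_lt_one hα).mpr hαβ)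
    hm_atTop hx_atTop hmx
  have hk : Tendsto (fun i => ((m i - 1 : ℕ) - β * L i) / √(L i)) l (𝓝 0) := by
    have h := hm.sub (tendsto_inv_sqrt_of_tendsto_atTop hL)
    rw [sub_zero] at h
    refine h.congr' ?_
    filter_upwards [hm_atTop.eventually_ge_atTop 1] with i hi
    rw [Nat.cast_sub hi, Nat.cast_one]
    ring
  have hck : Tendsto (fun i => (1 - β / α) * (x i - α * L i)
      - log (α / β) * ((m i - 1 : ℕ) - β * L i) + log (L i) / 2) l (𝓝 (c + log (α / β))) := by
    refine (hc.add_const _).congr' ?_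
    filter_upwards [hm_atTop.eventually_ge_atTop 1] with i hi
    rw [Nat.cast_sub hi, Nat.cast_one]
    ring
  have h := ((continuous_exp.tendsto _).comp
    (tendsto_log_poisson_term hα hβ hP hL hx hk hck)).mul hsum
  rw [exp_sub_log_mul_inv_one_sub_div hβ hαβ] at h
  refine h.congr' ?_
  filter_upwards [hx_atTop.eventually_gt_atTop 0] with i hxi
  simp only [Function.comp_apply]
  rw [S_eq_pow_div_factorial_mul_sum _ hxi.ne', exp_neg, exp_sub, exp_add, exp_sub, ← log_pow,
    exp_log (by positivity), exp_log (by positivity)]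
  ring

end Asymptotics

noncomputable def chi (α β y : ℝ) (b : ℕ → ℝ) (n : ℕ) : ℝ :=
  α * log n + α * (α - β - 1) / (β * (α - β)) * b n * log n
    - α / (2 * (α - β)) * log (log n) + α / (α - β) * y

section Chi

variable {α β y : ℝ} {b : ℕ → ℝ}

lemma tendsto_chi_sub_div_sqrt (hb : Tendsto (fun n : ℕ => b n * √(log n)) atTop (𝓝 0)) :
    Tendsto (fun n : ℕ => (chi α β y b n - α * log n) / √(log n)) atTop (𝓝 0) := by
  have hL : Tendsto (fun n : ℕ => log n) atTop atTop :=
    tendsto_log_atTop.comp tendsto_natCast_atTop_atTop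
  have h := ((hb.const_mul (α * (α - β - 1) / (β * (α - β)))).sub
    ((tendsto_log_div_sqrt_atTop.comp hL).const_mul (α / (2 * (α - β))))).add
    ((tendsto_inv_sqrt_of_tendsto_atTop hL).const_mul (α / (α - β) * y))
  simp only [mul_zero, sub_zero, add_zero] at h
  refine h.congr' ?_
  filter_upwards [hL.eventually_gt_atTop 0] with n hn
  have hs : √(log n) ^ 2 = log n := sq_sqrt hn.le
  simp only [chi, Function.comp_apply]
  generalize α * (α - β - 1) / (β * (α - β)) = δ
  generalize α / (2 * (α - β)) = γ
  generalize α / (α - β) = η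
  field_simp
  rw [hs]
  ring

lemma chi_centering (hβ : 0 < β) (hαβ : β < α) (hP : β * log (α / β) = α - β - 1) {m : ℕ}
    {n : ℕ} (hmn : (m : ℝ) = β * log n + b n * log n) :
    (1 - β / α) * (chi α β y b n - α * log n) - log (α / β) * (m - β * log n)
      + log (log n) / 2 = y := by
  have hα : 0 < α := hβ.trans hαβ
  have hab : α - β ≠ 0 := (sub_pos.mpr hαβ).ne'
  have hP' : log (α / β) = (α - β - 1) / β := by
    rw [eq_div_iff hβ.ne']
    linarith
  rw [hmn, hP', chi]
  field_simp
  ring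

end Chi

theorem stmt9_general (β : ℝ) (hβ : 0 < β)
    (α : ℝ) (hαβ : β < α)
    (hα : α - β * Real.log α = β - β * Real.log β + 1)
    (b : ℕ → ℝ) (m : ℕ → ℕ)
    (hmeq : ∀ᶠ n : ℕ in atTop, (m n : ℝ) = β * Real.log n + b n * Real.log n)
    (hb : Tendsto (fun n : ℕ => b n * Real.sqrt (Real.log n)) atTop (nhds 0))
    (y : ℝ) :
    Tendsto (fun n : ℕ =>
        (1 - S (m n)
            (α * Real.log n + α * (α - β - 1) / (β * (α - β)) * b n * Real.log n
              - α / (2 * (α - β)) * Real.log (Real.log n) + α / (α - β) * y)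
          * Real.exp
            (-(α * Real.log n + α * (α - β - 1) / (β * (α - β)) * b n * Real.log n
              - α / (2 * (α - β)) * Real.log (Real.log n) + α / (α - β) * y))) ^ n)
      atTop
      (nhds (Real.exp (-(1 / Real.sqrt (2 * π) * (Real.sqrt β / (α - β)) * Real.exp (-y))))) := by
  have hP : β * log (α / β) = α - β - 1 := by
    rw [log_div (hβ.trans hαβ).ne' hβ.ne']
    linarith
  have hL : Tendsto (fun n : ℕ => log n) atTop atTop :=
    tendsto_log_atTop.comp tendsto_natCast_atTop_atTop
  have hm : Tendsto (fun n : ℕ => (m n - β * log n) / √(log n)) atTop (𝓝 0) := by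
    refine hb.congr' ?_
    filter_upwards [hmeq, hL.eventually_gt_atTop 0] with n hmn hn
    rw [hmn, add_sub_cancel_left, mul_div_assoc, div_sqrt]
  have hc : Tendsto (fun n : ℕ => (1 - β / α) * (chi α β y b n - α * log n)
      - log (α / β) * (m n - β * log n) + log (log n) / 2) atTop (𝓝 y) := by
    refine tendsto_const_nhds.congr' ?_
    filter_upwards [hmeq] with n hmn
    exact (chi_centering hβ hαβ hP hmn).symm
  have hlim := tendsto_exp_mul_S_mul_exp_neg hβ hαβ hP hL (tendsto_chi_sub_div_sqrt hb) hm hc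
  have hnp : Tendsto (fun n : ℕ => (n : ℝ) * -(S (m n) (chi α β y b n) * exp (-chi α β y b n)))
      atTop (𝓝 (-(1 / √(2 * π) * (√β / (α - β)) * exp (-y)))) := by
    refine hlim.neg.congr' ?_
    filter_upwards [eventually_gt_atTop 0] with n hn
    rw [exp_log (by exact_mod_cast hn), mul_neg]
  have h := tendsto_one_add_pow_exp_of_tendsto hnp
  simp only [← sub_eq_add_neg] at h
  exact h

/-- Critical case `m = β ln n + b(n) ln n` with `b(n) = o(1/√(ln n))`: with
`χ(n) = α ln n + (α(α−β−1)/(β(α−β))) b(n) ln n − (α/(2(α−β))) ln ln n + (α/(α−β)) y`,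
one has `[1 − S_m(χ) e^{−χ}]^n → exp(−(1/√(2π)) (√β/(α−β)) e^{−y})`; since
`[1 − S_m(t/n) e^{−t/n}]^n` is the distribution function of the maximum `Δ_{m,n}` of `n`
independent Erlang(m, 1/n) random variables, this is the limiting Gumbel-type law of the
suitably normalized `Δ_{m,n}`. -/
theorem stmt9 (β : ℝ) (hβ : 0 < β)
    (α : ℝ) (hαβ : β < α)
    (hα : α - β * Real.log α = β - β * Real.log β + 1)
    (b : ℕ → ℝ) (m : ℕ → ℕ) (hm : ∀ n, 0 < m n)
    (hmeq : ∀ᶠ n : ℕ in atTop, (m n : ℝ) = β * Real.log n + b n * Real.log n)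
    (hb : Tendsto (fun n : ℕ => b n * Real.sqrt (Real.log n)) atTop (nhds 0))
    (y : ℝ) :
    Tendsto (fun n : ℕ =>
        (1 - S (m n)
            (α * Real.log n + α * (α - β - 1) / (β * (α - β)) * b n * Real.log n
              - α / (2 * (α - β)) * Real.log (Real.log n) + α / (α - β) * y)
          * Real.exp
            (-(α * Real.log n + α * (α - β - 1) / (β * (α - β)) * b n * Real.log n
              - α / (2 * (α - β)) * Real.log (Real.log n) + α / (α - β) * y))) ^ n)
      atTop
      (nhds (Real.exp (-(1 / Real.sqrt (2 * π) * (Real.sqrt β / (α - β)) * Real.exp (-y))))) :=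
  stmt9_general β hβ α hαβ hα b m hmeq hb y
end

section
/- For β > 0 let α(β) denote the unique solution in (β, ∞) of the equation α − β·ln α = β − β·ln β + 1. Then (α(β) − β)/√β → √2 as β → ∞; consequently, the constant C(β) := (1/2)·ln(2π·(α(β)−β)²/β) satisfies C(β) → ln(2√π) as β → ∞. -/
/-!
Put `u = (α - β)/β`, so that the defining equation becomes `β (u - log (1 + u)) = 1`.
The elementary bounds `u²/(2(1 + u)) ≤ u - log (1 + u) ≤ u²/(u + 2)` then pin
`β u² = (α - β)²/β` between `2` and `2 + 4/√β` once `β ≥ 4`, and both limits follow.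
-/

open Filter Real Set

namespace Real

lemma log_le_half_sub_inv {x : ℝ} (hx : 1 ≤ x) : log x ≤ (x - x⁻¹) / 2 := by
  rw [← sinh_log (by linarith)]
  exact self_le_sinh_iff.2 (log_nonneg hx)

lemma sq_div_le_sub_log_one_add {u : ℝ} (hu : 0 ≤ u) :
    u ^ 2 / (2 * (1 + u)) ≤ u - log (1 + u) := by
  have h := log_le_half_sub_inv (x := 1 + u) (by linarith)
  have : (1 + u - (1 + u)⁻¹) / 2 = u - u ^ 2 / (2 * (1 + u)) := by field_simp; ring
  linarith

lemma sub_log_one_add_le_sq_div {u : ℝ} (hu : 0 ≤ u) :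
    u - log (1 + u) ≤ u ^ 2 / (u + 2) := by
  have h := le_log_one_add_of_nonneg hu
  have : u - 2 * u / (u + 2) = u ^ 2 / (u + 2) := by field_simp; ring
  linarith

end Real

lemma mul_sq_mem_Icc_of_mul_sub_log_one_add_eq_one {β u : ℝ} (hβ : 4 ≤ β) (hu : 0 < u)
    (h : β * (u - log (1 + u)) = 1) : β * u ^ 2 ∈ Icc 2 (2 + 4 / √β) := by
  have hβ0 : 0 < β := by linarith
  have hlow : u + 2 ≤ β * u ^ 2 := by
    have := mul_le_mul_of_nonneg_left (sub_log_one_add_le_sq_div hu.le) hβ0.le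
    rw [h, mul_div_assoc', le_div_iff₀ (by linarith)] at this
    linarith
  have hupp : β * u ^ 2 ≤ 2 * (1 + u) := by
    have := mul_le_mul_of_nonneg_left (sq_div_le_sub_log_one_add hu.le) hβ0.le
    rw [h, mul_div_assoc', div_le_iff₀ (by linarith)] at this
    linarith
  -- `4 u² ≤ β u² ≤ 2 + 2u` forces `u ≤ 1`, hence `β u² ≤ 4` and `u ≤ 2/√β`.
  have hu1 : u ≤ 1 := by nlinarith
  have hsβ : 0 < √β := sqrt_pos.2 hβ0
  have hu2 : u * √β ≤ 2 := by
    have : (u * √β) ^ 2 ≤ 2 ^ 2 := by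
      rw [mul_pow, sq_sqrt hβ0.le]; nlinarith
    exact (pow_le_pow_iff_left₀ (by positivity) (by norm_num) (by norm_num)).1 this
  refine ⟨by linarith, ?_⟩
  have : 2 * u ≤ 4 / √β := by rw [le_div_iff₀ hsβ]; linarith
  linarith

lemma sq_sub_div_mem_Icc_of_sub_mul_log_eq {a b : ℝ} (hb : 4 ≤ b) (hab : b < a)
    (h : a - b * log a = b - b * log b + 1) : (a - b) ^ 2 / b ∈ Icc 2 (2 + 4 / √b) := by
  have hb0 : 0 < b := by linarith
  set u := (a - b) / b with hu
  have hu0 : 0 < u := div_pos (by linarith) hb0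
  have h1u : 1 + u = a / b := by rw [hu]; field_simp; ring
  have key : b * (u - log (1 + u)) = 1 := by
    rw [h1u, log_div (by linarith) hb0.ne', mul_sub, hu, mul_div_cancel₀ _ hb0.ne']
    linarith
  have : (a - b) ^ 2 / b = b * u ^ 2 := by rw [hu]; field_simp
  rw [this]
  exact mul_sq_mem_Icc_of_mul_sub_log_one_add_eq_one hb hu0 key

/-- If for each `β > 0`, `α(β)` is the unique solution in `(β, ∞)` of
`α − β ln α = β − β ln β + 1`, then `(α(β) − β)/√β → √2` as `β → ∞`, and consequently
`C(β) = (1/2) ln(2π (α(β) − β)²/β) → ln(2√π)` as `β → ∞`. -/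
theorem stmt19 (α : ℝ → ℝ)
    (hα : ∀ β : ℝ, 0 < β →
      β < α β ∧ α β - β * Real.log (α β) = β - β * Real.log β + 1) :
    Tendsto (fun β : ℝ => (α β - β) / Real.sqrt β) atTop (nhds (Real.sqrt 2)) ∧
      Tendsto (fun β : ℝ => 1 / 2 * Real.log (2 * π * (α β - β) ^ 2 / β)) atTop
        (nhds (Real.log (2 * Real.sqrt π))) := by
  have hbounds : ∀ᶠ β in atTop, (α β - β) ^ 2 / β ∈ Icc 2 (2 + 4 / √β) := by
    filter_upwards [eventually_ge_atTop 4] with β hβ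
    obtain ⟨hlt, heq⟩ := hα β (by linarith)
    exact sq_sub_div_mem_Icc_of_sub_mul_log_eq hβ hlt heq
  have hupper : Tendsto (fun β : ℝ => 2 + 4 / √β) atTop (nhds 2) := by
    simpa using tendsto_const_nhds.add (tendsto_const_nhds.div_atTop tendsto_sqrt_atTop)
  have hsq : Tendsto (fun β => (α β - β) ^ 2 / β) atTop (nhds 2) :=
    tendsto_of_tendsto_of_tendsto_of_le_of_le' tendsto_const_nhds hupper
      (hbounds.mono fun _ h => h.1) (hbounds.mono fun _ h => h.2)
  constructor
  · refine (continuous_sqrt.tendsto 2 |>.comp hsq).congr' ?_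
    filter_upwards [eventually_gt_atTop 0] with β hβ
    obtain ⟨hlt, -⟩ := hα β hβ
    simp [sqrt_div' _ hβ.le, sqrt_sq (by linarith : 0 ≤ α β - β)]
  · have hlim : Real.log (2 * √π) = 1 / 2 * log (2 * π * 2) := by
      rw [show 2 * π * 2 = (2 * √π) ^ 2 by rw [mul_pow, sq_sqrt pi_pos.le]; ring, log_pow]
      ring
    rw [hlim]
    refine ((continuousAt_log (by positivity)).tendsto.comp
      (hsq.const_mul (2 * π))).const_mul (1 / 2) |>.congr fun β => ?_
    simp [mul_div_assoc]
end
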